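/- For every odd k ≥ 3, the formula F is unsatisfiable: there is no assignment f : V → Z_2^k satisfying every clause of F. Consequently, the structures 𝒜 = 𝒜(F) and ℬ = ℬ(F) are not isomorphic. -/

import Mathlib

namespace QVT

/-- A finite relational signature: a finite type of relation symbols, each with an arity. -/
structure Signature : Type 1 where
  symbols : Type
  fin : Fintype symbols
  arity : symbols → ℕ

/-- A structure over a relational signature. -/
structure Struct (σ : Signature) : Type 1 where
  carrier : Type
  rel : (R : σ.symbols) → (Fin (σ.arity R) → carrier) → Prop

/-- First-order formulas over the signature `σ`, with variables indexed by `ℕ`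
(variable `i` represents `x_{i+1}`; variables may be reused and requantified). -/
inductive Fml (σ : Signature) : Type
  | eq : ℕ → ℕ → Fml σ
  | rel : (R : σ.symbols) → (Fin (σ.arity R) → ℕ) → Fml σ
  | not : Fml σ → Fml σ
  | and : Fml σ → Fml σ → Fml σ
  | or : Fml σ → Fml σ → Fml σ
  | ex : ℕ → Fml σ → Fml σ
  | all : ℕ → Fml σ → Fml σ

namespace Fml

variable {σ : Signature}

/-- Satisfaction of a formula in a structure under a (total) variable assignment. -/
def Sat (M : Struct σ) : (ℕ → M.carrier) → Fml σ → Prop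
  | f, .eq i j => f i = f j
  | f, .rel R v => M.rel R fun m => f (v m)
  | f, .not φ => ¬ Sat M f φ
  | f, .and φ ψ => Sat M f φ ∧ Sat M f ψ
  | f, .or φ ψ => Sat M f φ ∨ Sat M f ψ
  | f, .ex i φ => ∃ a : M.carrier, Sat M (Function.update f i a) φ
  | f, .all i φ => ∀ a : M.carrier, Sat M (Function.update f i a) φ

/-- All variables (free or bound) occurring in a formula. -/
def vars : Fml σ → Finset ℕ
  | .eq i j => {i, j}
  | .rel _ v => Finset.univ.image v
  | .not φ => vars φ
  | .and φ ψ => vars φ ∪ vars ψ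
  | .or φ ψ => vars φ ∪ vars ψ
  | .ex i φ => insert i (vars φ)
  | .all i φ => insert i (vars φ)

/-- The free variables of a formula. -/
def freeVars : Fml σ → Finset ℕ
  | .eq i j => {i, j}
  | .rel _ v => Finset.univ.image v
  | .not φ => freeVars φ
  | .and φ ψ => freeVars φ ∪ freeVars ψ
  | .or φ ψ => freeVars φ ∪ freeVars ψ
  | .ex i φ => (freeVars φ).erase i
  | .all i φ => (freeVars φ).erase i

/-- The number of quantifier occurrences in a formula. -/
def quant : Fml σ → ℕ
  | .eq _ _ => 0
  | .rel _ _ => 0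
  | .not φ => quant φ
  | .and φ ψ => quant φ + quant ψ
  | .or φ ψ => quant φ + quant ψ
  | .ex _ φ => quant φ + 1
  | .all _ φ => quant φ + 1

/-- The quantifier depth (quantifier rank) of a formula. -/
def depth : Fml σ → ℕ
  | .eq _ _ => 0
  | .rel _ _ => 0
  | .not φ => depth φ
  | .and φ ψ => max (depth φ) (depth ψ)
  | .or φ ψ => max (depth φ) (depth ψ)
  | .ex _ φ => depth φ + 1
  | .all _ φ => depth φ + 1

/-- The size (total number of symbols) of a formula. -/
def size : Fml σ → ℕ
  | .eq _ _ => 3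
  | .rel R _ => 1 + σ.arity R
  | .not φ => size φ + 1
  | .and φ ψ => size φ + size ψ + 1
  | .or φ ψ => size φ + size ψ + 1
  | .ex _ φ => size φ + 2
  | .all _ φ => size φ + 2

/-- The existential-positive formulas: built from atomic formulas using only
`∧`, `∨` and `∃`. -/
def ExPos : Fml σ → Prop
  | .eq _ _ => True
  | .rel _ _ => True
  | .not _ => False
  | .and φ ψ => ExPos φ ∧ ExPos ψ
  | .or φ ψ => ExPos φ ∧ ExPos ψ
  | .ex _ φ => ExPos φ
  | .all _ _ => False

end Fml

/-- `φ` is a formula of `L^k`: it only uses the variables `x_1, …, x_k`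
(indices `0, …, k-1`). -/
def UsesVars {σ : Signature} (k : ℕ) (φ : Fml σ) : Prop :=
  ∀ i ∈ φ.vars, i < k

/-- A sentence is a formula with no free variables. -/
def IsSentence {σ : Signature} (φ : Fml σ) : Prop := φ.freeVars = ∅

/-- Satisfaction of a sentence (assignment-independent for sentences over
nonempty structures). -/
def SatS {σ : Signature} (M : Struct σ) (φ : Fml σ) : Prop :=
  ∀ f : ℕ → M.carrier, Fml.Sat M f φ

/-- `φ` distinguishes `A` from `B`: `A ⊨ φ` and `B ⊭ φ`. -/
def Distinguishes {σ : Signature} (A B : Struct σ) (φ : Fml σ) : Prop :=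
  SatS A φ ∧ ¬ SatS B φ

/-- `A` and `B` agree on `φ`. -/
def AgreeOn {σ : Signature} (A B : Struct σ) (φ : Fml σ) : Prop :=
  SatS A φ ↔ SatS B φ

/-- A pebbled structure: a structure together with a partial assignment of the
variables to elements. -/
structure Pebbled (σ : Signature) : Type 1 where
  M : Struct σ
  α : ℕ → Option M.carrier

/-- The domain of the partial assignment of a pebbled structure. -/
def Pebbled.dom {σ : Signature} (P : Pebbled σ) : Set ℕ := {i | P.α i ≠ none}

/-- A `k`-pebbled structure: only the variables `x_1, …, x_k` may be assigned. -/
def Pebbled.IsK {σ : Signature} (k : ℕ) (P : Pebbled σ) : Prop :=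
  ∀ i, k ≤ i → P.α i = none

/-- Satisfaction for pebbled structures: `φ` holds under every total extension of
the partial assignment. -/
def PSat {σ : Signature} (P : Pebbled σ) (φ : Fml σ) : Prop :=
  ∀ f : ℕ → P.M.carrier, (∀ i a, P.α i = some a → f i = a) → Fml.Sat P.M f φ

/-- Two sets of pebbled structures disagree on `φ`: every member of `𝔄`
satisfies `φ` and no member of `𝔅` does. -/
def DisagreeOn {σ : Signature} (𝔄 𝔅 : Set (Pebbled σ)) (φ : Fml σ) : Prop :=
  (∀ P ∈ 𝔄, PSat P φ) ∧ (∀ P ∈ 𝔅, ¬ PSat P φ)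

/-- A constraint over variables `V` and group `G`: a tuple of variables together
with a subset `H ⊆ G`. -/
structure Constraint (V G : Type) : Type where
  vars : List V
  H : Set G

/-- A (total) assignment satisfies a constraint if the sum of the values of its
variables lies in `H`. -/
def Constraint.SatBy {V G : Type} [AddCommMonoid G] (C : Constraint V G) (f : V → G) : Prop :=
  (C.vars.map f).sum ∈ C.H

/-- A partial assignment (a function `f` regarded on the domain `X`) violates no
constraint of `F`: every constraint of `F` all of whose variables lie in `X` is
satisfied. -/
def ViolatesNoClause {V G : Type} [AddCommMonoid G]
    (F : Finset (Constraint V G)) (X : Set V) (f : V → G) : Prop :=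
  ∀ C ∈ F, (∀ x ∈ C.vars, x ∈ X) → C.SatBy f

/-- The set of the constraint `C` in `F̂`: its complement if `C` is
distinguishing (i.e. `C ∈ D`), and `C.H` otherwise. -/
def hatH {V G : Type} (D : Set (Constraint V G)) (C : Constraint V G) : Set G :=
  {g | (C ∈ D → g ∉ C.H) ∧ (C ∉ D → g ∈ C.H)}

/-- `F` (with distinguishing constraints `D`) is a formula over `G` using at most
`k`-ary clauses: each clause is a nonrepeating tuple of at most `k` variables, and
each set appearing in `F̂` is a subgroup of index two. -/
def IsXorFormula {V G : Type} [AddCommGroup G] (k : ℕ)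
    (F : Finset (Constraint V G)) (D : Set (Constraint V G)) : Prop :=
  (∀ C ∈ D, C ∈ F) ∧
  ∀ C ∈ F, C.vars.Nodup ∧ C.vars.length ≤ k ∧
    ∃ H' : AddSubgroup G, hatH D C = ↑H' ∧ H'.index = 2

/-- The common signature of the structures `𝒜(F)` and `ℬ(F)`: a unary relation
symbol `R_x` for each variable `x` and an `m`-ary relation symbol `R_C` for each
constraint `C ∈ F` on `m` variables. -/
@[reducible] def xorSig (V G : Type) [Fintype V] [Fintype G]
    (F : Finset (Constraint V G)) : Signature where
  symbols := V ⊕ {C : Constraint V G // C ∈ F}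
  fin := inferInstance
  arity := fun s => match s with
    | Sum.inl _ => 1
    | Sum.inr C => C.1.vars.length

/-- The structure with domain `V × G` (the element `x^g` is the pair `(x,g)`),
where the relation of the constraint `C` is interpreted using the set `Hf C`. -/
@[reducible] def mkXorStruct (V G : Type) [Fintype V] [Fintype G] [AddCommMonoid G]
    (F : Finset (Constraint V G)) (Hf : Constraint V G → Set G) :
    Struct (xorSig V G F) where
  carrier := V × G
  rel := fun R => match R with
    | Sum.inl x => fun t => (t 0).1 = x
    | Sum.inr C => fun t => (∀ i, (t i).1 = C.1.vars.get i) ∧ (∑ i, (t i).2) ∈ Hf C.1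

/-- The structure `𝒜(F) = X(F̂)` (with relations renamed to the common signature). -/
@[reducible] def Astruct (V G : Type) [Fintype V] [Fintype G] [AddCommMonoid G]
    (F : Finset (Constraint V G)) (D : Set (Constraint V G)) : Struct (xorSig V G F) :=
  mkXorStruct V G F (hatH D)

/-- The structure `ℬ(F) = X(F)`. -/
@[reducible] def Bstruct (V G : Type) [Fintype V] [Fintype G] [AddCommMonoid G]
    (F : Finset (Constraint V G)) : Struct (xorSig V G F) :=
  mkXorStruct V G F (fun C => C.H)

/-- An isomorphism between two structures over a common signature: a bijection of
the domains preserving all relations in both directions. -/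
def Isomorphic {σ : Signature} (A B : Struct σ) : Prop :=
  ∃ e : A.carrier ≃ B.carrier,
    ∀ (R : σ.symbols) (t : Fin (σ.arity R) → A.carrier),
      A.rel R t ↔ B.rel R (fun i => e (t i))

/-- `m : Y → B(F)` (with `Y ⊆ A(F) = V × G`) is assignment defining: it respects
the first (variable) component, and `|m y| + |y|` depends only on `π y`. -/
def AssignDefining {V G : Type} [AddCommMonoid G] (Y : Set (V × G)) (m : Y → V × G) : Prop :=
  (∀ y : Y, (m y).1 = (y : V × G).1) ∧
  ∀ y z : Y, (y : V × G).1 = (z : V × G).1 →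
    (m y).2 + (y : V × G).2 = (m z).2 + (z : V × G).2

/-- `m : Y → B.carrier` (with `Y ⊆ A.carrier`) is a partial isomorphism: it is
injective and preserves all relations in both directions. -/
def PartialIsoMap {σ : Signature} (A B : Struct σ) (Y : Set A.carrier)
    (m : Y → B.carrier) : Prop :=
  Function.Injective m ∧
  ∀ (R : σ.symbols) (t : Fin (σ.arity R) → Y),
    A.rel R (fun i => (t i : A.carrier)) ↔ B.rel R (fun i => m (t i))

/-- The group `Z_2^k`. -/
abbrev Gk (k : ℕ) : Type := Fin k → ZMod 2

/-- The variable set `V = {s_1, …, s_k, e_1, …, e_k}`: `Sum.inl i` is `s_{i+1}`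
and `Sum.inr ℓ` is `e_{ℓ+1}`. -/
abbrev Vk (k : ℕ) : Type := Fin k ⊕ Fin k

/-- The elements of `Z_2^k` whose coordinates sum to `0`. -/
def EVEN (k : ℕ) : Set (Gk k) := {g | ∑ i, g i = 0}

/-- The elements of `Z_2^k` whose coordinates sum to `1`. -/
def ODD (k : ℕ) : Set (Gk k) := {g | ∑ i, g i = 1}

open scoped Classical in
/-- The formula `F` over `Z_2^k` from Section 5: clauses `s_1 ∈ ODD`;
`s_i ∈ EVEN` for `i ≠ 1`; `(e_ℓ + Σ_{i≠ℓ} s_i)[ℓ] = 0`; `s_i[i] = 0`;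
`e_ℓ[i] = 0`. -/
noncomputable def baseF (k : ℕ) (hk : 0 < k) : Finset (Constraint (Vk k) (Gk k)) :=
  {⟨[Sum.inl ⟨0, hk⟩], ODD k⟩}
  ∪ (Finset.univ.filter (fun i : Fin k => i ≠ ⟨0, hk⟩)).image
      (fun i : Fin k => ⟨[Sum.inl i], EVEN k⟩)
  ∪ Finset.univ.image (fun ℓ : Fin k =>
      ⟨Sum.inr ℓ :: (Finset.univ.erase ℓ).toList.map Sum.inl, {g : Gk k | g ℓ = 0}⟩)
  ∪ Finset.univ.image (fun i : Fin k => ⟨[Sum.inl i], {g : Gk k | g i = 0}⟩)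
  ∪ Finset.univ.image (fun p : Fin k × Fin k => ⟨[Sum.inr p.1], {g : Gk k | g p.2 = 0}⟩)

/-- The set of distinguishing clauses of `baseF`: just `s_1 ∈ ODD`. -/
def baseD (k : ℕ) (hk : 0 < k) : Set (Constraint (Vk k) (Gk k)) :=
  {⟨[Sum.inl ⟨0, hk⟩], ODD k⟩}

/-- `j+1` as an element of `Fin n` (junk value `j` if `j` is the last index). -/
def succIdx {n : ℕ} (j : Fin n) : Fin n := if h : j.1 + 1 < n then ⟨j.1 + 1, h⟩ else j

open scoped Classical in
/-- The chained formula `𝓕` with `n` links: the variable `x(i)` is the pair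
`(i, x)`.  It consists of the clauses of the `n` copies of `baseF`, except that
`s_1(i) ∈ ODD` is kept only for `i = 1` and `e_ℓ(i)[ℓ] = 0` only for `i = n`,
together with the linking clauses `e_ℓ(i) + s_1(i+1) ∈ EVEN` for `i ∈ [n-1]`. -/
noncomputable def chainF (k n : ℕ) (hk : 0 < k) (hn : 0 < n) :
    Finset (Constraint (Fin n × Vk k) (Gk k)) :=
  {⟨[((⟨0, hn⟩ : Fin n), Sum.inl ⟨0, hk⟩)], ODD k⟩}
  ∪ (Finset.univ.filter (fun p : Fin n × Fin k => p.2 ≠ ⟨0, hk⟩)).image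
      (fun p : Fin n × Fin k => ⟨[(p.1, Sum.inl p.2)], EVEN k⟩)
  ∪ Finset.univ.image (fun p : Fin n × Fin k =>
      ⟨(p.1, Sum.inr p.2) ::
          (Finset.univ.erase p.2).toList.map (fun i : Fin k => (p.1, Sum.inl i)),
        {g : Gk k | g p.2 = 0}⟩)
  ∪ Finset.univ.image (fun p : Fin n × Fin k =>
      ⟨[(p.1, Sum.inl p.2)], {g : Gk k | g p.2 = 0}⟩)
  ∪ ((Finset.univ : Finset (Fin n × Fin k × Fin k)).filter
        (fun p => p.2.2 ≠ p.2.1 ∨ p.1 = (⟨n - 1, by omega⟩ : Fin n))).image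
      (fun p : Fin n × Fin k × Fin k =>
        ⟨[(p.1, Sum.inr p.2.1)], {g : Gk k | g p.2.2 = 0}⟩)
  ∪ ((Finset.univ : Finset (Fin n × Fin k)).filter (fun p => p.1.1 + 1 < n)).image
      (fun p : Fin n × Fin k =>
        ⟨[(p.1, Sum.inr p.2), (succIdx p.1, Sum.inl ⟨0, hk⟩)], EVEN k⟩)

/-- The set of distinguishing clauses of `chainF`: just `s_1(1) ∈ ODD`. -/
def chainD (k n : ℕ) (hk : 0 < k) (hn : 0 < n) : Set (Constraint (Fin n × Vk k) (Gk k)) :=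
  {⟨[((⟨0, hn⟩ : Fin n), Sum.inl ⟨0, hk⟩)], ODD k⟩}


open scoped Classical

lemma list_sum_map_eq {α β : Type*} [AddCommMonoid β] (l : List α) (f : α → β) :
    (l.map f).sum = ∑ i : Fin l.length, f (l.get i) := by
  induction l with
  | nil => simp
  | cons a t ih =>
      rw [List.map_cons, List.sum_cons, ih]
      show _ = ∑ i : Fin (t.length + 1), f ((a :: t).get i)
      rw [Fin.sum_univ_succ]
      rfl

section Base

variable (k : ℕ) (hk0 : 0 < k)

lemma base_unsat : ¬ ∃ f : Vk k → Gk k, ∀ C ∈ baseF k hk0, C.SatBy f := by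
  rintro ⟨f, hf⟩
  -- memberships
  have m1 : (⟨[Sum.inl ⟨0, hk0⟩], ODD k⟩ : Constraint (Vk k) (Gk k)) ∈ baseF k hk0 :=
    Finset.mem_union_left _ (Finset.mem_union_left _ (Finset.mem_union_left _
      (Finset.mem_union_left _ (Finset.mem_singleton_self _))))
  have m2 : ∀ i : Fin k, i ≠ ⟨0, hk0⟩ →
      (⟨[Sum.inl i], EVEN k⟩ : Constraint (Vk k) (Gk k)) ∈ baseF k hk0 := by
    intro i hi
    exact Finset.mem_union_left _ (Finset.mem_union_left _ (Finset.mem_union_left _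
      (Finset.mem_union_right _ (Finset.mem_image.mpr
        ⟨i, Finset.mem_filter.mpr ⟨Finset.mem_univ i, hi⟩, rfl⟩))))
  have m3 : ∀ ℓ : Fin k,
      (⟨Sum.inr ℓ :: (Finset.univ.erase ℓ).toList.map Sum.inl, {g : Gk k | g ℓ = 0}⟩ :
        Constraint (Vk k) (Gk k)) ∈ baseF k hk0 := by
    intro ℓ
    exact Finset.mem_union_left _ (Finset.mem_union_left _ (Finset.mem_union_right _
      (Finset.mem_image.mpr ⟨ℓ, Finset.mem_univ ℓ, rfl⟩)))
  have m4 : ∀ i : Fin k,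
      (⟨[Sum.inl i], {g : Gk k | g i = 0}⟩ : Constraint (Vk k) (Gk k)) ∈ baseF k hk0 := by
    intro i
    exact Finset.mem_union_left _ (Finset.mem_union_right _
      (Finset.mem_image.mpr ⟨i, Finset.mem_univ i, rfl⟩))
  have m5 : ∀ ℓ i : Fin k,
      (⟨[Sum.inr ℓ], {g : Gk k | g i = 0}⟩ : Constraint (Vk k) (Gk k)) ∈ baseF k hk0 := by
    intro ℓ i
    exact Finset.mem_union_right _ (Finset.mem_image.mpr ⟨(ℓ, i), Finset.mem_univ _, rfl⟩)
  -- extracted facts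
  have h1 : ∑ j, f (Sum.inl ⟨0, hk0⟩) j = 1 := by
    have := hf _ m1
    simpa [Constraint.SatBy, ODD] using this
  have h2 : ∀ i : Fin k, i ≠ ⟨0, hk0⟩ → ∑ j, f (Sum.inl i) j = 0 := by
    intro i hi
    have := hf _ (m2 i hi)
    simpa [Constraint.SatBy, EVEN] using this
  have h5 : ∀ ℓ : Fin k, f (Sum.inr ℓ) = 0 := by
    intro ℓ
    funext i
    have := hf _ (m5 ℓ i)
    simpa [Constraint.SatBy] using this
  have h4 : ∀ i : Fin k, f (Sum.inl i) i = 0 := by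
    intro i
    have := hf _ (m4 i)
    simpa [Constraint.SatBy] using this
  have h3 : ∀ ℓ : Fin k, (∑ i ∈ Finset.univ.erase ℓ, f (Sum.inl i)) ℓ = 0 := by
    intro ℓ
    have := hf _ (m3 ℓ)
    simp only [Constraint.SatBy, List.map_cons, List.sum_cons, List.map_map,
      Set.mem_setOf_eq] at this
    rw [Finset.sum_map_toList] at this
    have hz := h5 ℓ
    have : (f (Sum.inr ℓ) + ∑ i ∈ Finset.univ.erase ℓ, (f ∘ Sum.inl) i) ℓ = 0 := this
    simpa [hz] using this
  -- the total sum vanishes coordinatewise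
  have hS : ∀ ℓ : Fin k, ∑ i, f (Sum.inl i) ℓ = 0 := by
    intro ℓ
    have := h3 ℓ
    rw [Finset.sum_apply] at this
    have hsplit : ∑ i, f (Sum.inl i) ℓ
        = f (Sum.inl ℓ) ℓ + ∑ i ∈ Finset.univ.erase ℓ, f (Sum.inl i) ℓ :=
      (Finset.add_sum_erase _ _ (Finset.mem_univ ℓ)).symm
    rw [hsplit, h4, this, add_zero]
  -- double counting
  have hcontra : (0 : ZMod 2) = 1 := by
    have e1 : ∑ ℓ : Fin k, ∑ i : Fin k, f (Sum.inl i) ℓ = 0 := by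
      simp [hS]
    have e2 : ∑ i : Fin k, ∑ ℓ : Fin k, f (Sum.inl i) ℓ = 1 := by
      rw [Finset.sum_eq_single (⟨0, hk0⟩ : Fin k)]
      · exact h1
      · intro i _ hi; exact h2 i hi
      · intro h; exact absurd (Finset.mem_univ _) h
    rw [← e1, Finset.sum_comm, e2]
  exact absurd hcontra (by decide)

lemma zero_mem_hatH : ∀ C ∈ baseF k hk0, (0 : Gk k) ∈ hatH (baseD k hk0) C := by
  intro C hC
  constructor
  · intro hCD
    have hCeq : C = ⟨[Sum.inl ⟨0, hk0⟩], ODD k⟩ := hCD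
    subst hCeq
    simp [ODD]
  · intro hCD
    have hC' := hC
    simp only [baseF, Finset.mem_union] at hC'
    rcases hC' with ((((h | h) | h) | h) | h)
    · exact absurd (show C ∈ baseD k hk0 from Finset.mem_singleton.mp h) hCD
    · obtain ⟨i, -, rfl⟩ := Finset.mem_image.mp h
      simp [EVEN]
    · obtain ⟨ℓ, -, rfl⟩ := Finset.mem_image.mp h
      simp
    · obtain ⟨i, -, rfl⟩ := Finset.mem_image.mp h
      simp
    · obtain ⟨p, -, rfl⟩ := Finset.mem_image.mp h
      simp

lemma base_noniso :
    ¬ Isomorphic (Astruct (Vk k) (Gk k) (baseF k hk0) (baseD k hk0))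
        (Bstruct (Vk k) (Gk k) (baseF k hk0)) := by
  rintro ⟨e, he⟩
  apply base_unsat k hk0
  refine ⟨fun x => (e (x, 0)).2, ?_⟩
  intro C hC
  have hfst : ∀ a : Vk k × Gk k, (e a).1 = a.1 := by
    intro a
    have := (he (Sum.inl a.1) (fun _ => a)).mp rfl
    exact this
  set t : Fin ((xorSig (Vk k) (Gk k) (baseF k hk0)).arity (Sum.inr ⟨C, hC⟩)) → Vk k × Gk k :=
    fun i => (C.vars.get i, 0) with ht
  have hA : (Astruct (Vk k) (Gk k) (baseF k hk0) (baseD k hk0)).rel (Sum.inr ⟨C, hC⟩) t := by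
    refine ⟨fun i => rfl, ?_⟩
    simpa [ht] using zero_mem_hatH k hk0 C hC
  have hB := (he (Sum.inr ⟨C, hC⟩) t).mp hA
  obtain ⟨-, hBsum⟩ := hB
  show (C.vars.map (fun x => (e (x, 0)).2)).sum ∈ C.H
  rw [list_sum_map_eq]
  exact hBsum

end Base

/-- the unsatisfiability of `F`, Section 5.2 of the paper. For every
odd `k ≥ 3` the formula `F` (= `baseF k`) is unsatisfiable; consequently, the
structures `𝒜 = 𝒜(F)` and `ℬ = ℬ(F)` are not isomorphic. -/
theorem statement_14 (k : ℕ) (hk : 3 ≤ k) (hkodd : Odd k) :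
    (¬ ∃ f : Vk k → Gk k, ∀ C ∈ baseF k (by omega), C.SatBy f) ∧
    ¬ Isomorphic (Astruct (Vk k) (Gk k) (baseF k (by omega)) (baseD k (by omega)))
        (Bstruct (Vk k) (Gk k) (baseF k (by omega))) :=
  ⟨base_unsat k (by omega), base_noniso k (by omega)⟩

end QVT
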